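/- For every 2NWA A over Σ, there exists a nice 2NWA A' over Σ such that L_WW2(A) = L_WW2(A'). -/

import Mathlib

/-- A matching relation of length `n`, on positions `1, …, n`. -/
structure Matching (n : ℕ) where
  rel : ℕ → ℕ → Prop
  ordered : ∀ i j, rel i j → 1 ≤ i ∧ i < j ∧ j ≤ n
  unique : ∀ i j k l, rel i j → rel k l →
    (i = k ∨ i = l ∨ j = k ∨ j = l) → i = k ∧ j = l
  noncrossing : ∀ i j k l, rel i j → rel k l → i < k → k < j → l < j

/-- A 2-nested word: a word together with two matchings of its length. -/
structure TwoNW (α : Type) where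
  word : List α
  M1 : Matching word.length
  M2 : Matching word.length

def Matching.IsCall {n : ℕ} (M : Matching n) (i : ℕ) : Prop := ∃ j, M.rel i j
def Matching.IsRet {n : ℕ} (M : Matching n) (i : ℕ) : Prop := ∃ j, M.rel j i
def Matching.IsInt {n : ℕ} (M : Matching n) (i : ℕ) : Prop := ¬ M.IsCall i ∧ ¬ M.IsRet i

/-- `(i1,i2,i3,i4)` is a 2-wave of the pair of matchings `(M1, M2)`. -/
def IsTwoWaveQuad {n : ℕ} (M1 M2 : Matching n) (i1 i2 i3 i4 : ℕ) : Prop :=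
  i1 < i2 ∧ i2 < i3 ∧ i3 < i4 ∧
  M1.rel i1 i2 ∧ M1.rel i3 i4 ∧ M2.rel i2 i3 ∧ M2.rel i1 i4

/-- A 2-wave structure: every arch of `M1 ∪ M2` is an arch of some 2-wave. -/
def IsWaveStructure {n : ℕ} (M1 M2 : Matching n) : Prop :=
  (∀ i j, M1.rel i j → ∃ i1 i2 i3 i4, IsTwoWaveQuad M1 M2 i1 i2 i3 i4 ∧
      ((i = i1 ∧ j = i2) ∨ (i = i3 ∧ j = i4))) ∧
  (∀ i j, M2.rel i j → ∃ i1 i2 i3 i4, IsTwoWaveQuad M1 M2 i1 i2 i3 i4 ∧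
      ((i = i2 ∧ j = i3) ∨ (i = i1 ∧ j = i4)))

/-- A 2-wave word. -/
def TwoNW.IsWaveWord {α : Type} (ω : TwoNW α) : Prop := IsWaveStructure ω.M1 ω.M2

/-- A 2-nested word automaton (2NWA); each transition table is presented as a
set of (input, output) pairs. -/
structure TwoNWA (α Q P : Type) where
  init : Set Q
  final : Set Q
  Δcc : Set ((Q × α) × (P × P × Q))
  Δrc : Set ((Q × P × α) × (P × Q))
  Δcr : Set ((Q × P × α) × (P × Q))
  Δrr : Set ((Q × P × P × α) × Q)
  Δci : Set ((Q × α) × (P × Q))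
  Δic : Set ((Q × α) × (P × Q))
  Δri : Set ((Q × P × α) × Q)
  Δir : Set ((Q × P × α) × Q)
  Δii : Set ((Q × α) × Q)

/-- The local run condition at position `i` (with `1 ≤ i ≤ |w|`): `ℓ` is the
sequence of linear states, and `h1 i` (resp. `h2 i`) is the hierarchical state
labelling the `M1`- (resp. `M2`-) arch whose call position is `i`. -/
def TwoNWA.RunAt {α Q P : Type} (A : TwoNWA α Q P) (ω : TwoNW α)
    (ℓ : ℕ → Q) (h1 h2 : ℕ → P) (i : ℕ) : Prop :=
  ∃ a, ω.word[i - 1]? = some a ∧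
    ((ω.M1.IsCall i ∧ ω.M2.IsCall i ∧ ((ℓ (i-1), a), (h1 i, h2 i, ℓ i)) ∈ A.Δcc)
   ∨ (∃ j, ω.M1.rel j i ∧ ω.M2.IsCall i ∧ ((ℓ (i-1), h1 j, a), (h2 i, ℓ i)) ∈ A.Δrc)
   ∨ (ω.M1.IsCall i ∧ (∃ j, ω.M2.rel j i ∧ ((ℓ (i-1), h2 j, a), (h1 i, ℓ i)) ∈ A.Δcr))
   ∨ (∃ j k, ω.M1.rel j i ∧ ω.M2.rel k i ∧ ((ℓ (i-1), h1 j, h2 k, a), ℓ i) ∈ A.Δrr)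
   ∨ (ω.M1.IsCall i ∧ ω.M2.IsInt i ∧ ((ℓ (i-1), a), (h1 i, ℓ i)) ∈ A.Δci)
   ∨ (ω.M1.IsInt i ∧ ω.M2.IsCall i ∧ ((ℓ (i-1), a), (h2 i, ℓ i)) ∈ A.Δic)
   ∨ (∃ j, ω.M1.rel j i ∧ ω.M2.IsInt i ∧ ((ℓ (i-1), h1 j, a), ℓ i) ∈ A.Δri)
   ∨ (ω.M1.IsInt i ∧ (∃ j, ω.M2.rel j i ∧ ((ℓ (i-1), h2 j, a), ℓ i) ∈ A.Δir))
   ∨ (ω.M1.IsInt i ∧ ω.M2.IsInt i ∧ ((ℓ (i-1), a), ℓ i) ∈ A.Δii))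

def TwoNWA.IsRun {α Q P : Type} (A : TwoNWA α Q P) (ω : TwoNW α)
    (ℓ : ℕ → Q) (h1 h2 : ℕ → P) : Prop :=
  ∀ i, 1 ≤ i → i ≤ ω.word.length → A.RunAt ω ℓ h1 h2 i

def TwoNWA.Accepts {α Q P : Type} (A : TwoNWA α Q P) (ω : TwoNW α) : Prop :=
  ∃ ℓ h1 h2, A.IsRun ω ℓ h1 h2 ∧ ℓ 0 ∈ A.init ∧ ℓ ω.word.length ∈ A.final

/-- The language of 2-nested words accepted by `A`. -/
def TwoNWA.lang {α Q P : Type} (A : TwoNWA α Q P) : Set (TwoNW α) :=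
  { ω | A.Accepts ω }

/-- The language of 2-wave words accepted by `A`. -/
def TwoNWA.langWW {α Q P : Type} (A : TwoNWA α Q P) : Set (TwoNW α) :=
  { ω | A.Accepts ω ∧ ω.IsWaveWord }

/-- There is a run of `A` on `ω` from linear state `q` to linear state `q'`. -/
def TwoNWA.Exec {α Q P : Type} (A : TwoNWA α Q P) (ω : TwoNW α) (q q' : Q) : Prop :=
  ∃ ℓ h1 h2, A.IsRun ω ℓ h1 h2 ∧ ℓ 0 = q ∧ ℓ ω.word.length = q'

/-- Deterministic 2NWA: a single initial state, and each transition table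
induces a function from inputs to outputs. -/
def TwoNWA.Deterministic {α Q P : Type} (A : TwoNWA α Q P) : Prop :=
  (∃ q0, A.init = {q0}) ∧
  (∀ x y y', (x, y) ∈ A.Δcc → (x, y') ∈ A.Δcc → y = y') ∧
  (∀ x y y', (x, y) ∈ A.Δrc → (x, y') ∈ A.Δrc → y = y') ∧
  (∀ x y y', (x, y) ∈ A.Δcr → (x, y') ∈ A.Δcr → y = y') ∧
  (∀ x y y', (x, y) ∈ A.Δrr → (x, y') ∈ A.Δrr → y = y') ∧
  (∀ x y y', (x, y) ∈ A.Δci → (x, y') ∈ A.Δci → y = y') ∧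
  (∀ x y y', (x, y) ∈ A.Δic → (x, y') ∈ A.Δic → y = y') ∧
  (∀ x y y', (x, y) ∈ A.Δri → (x, y') ∈ A.Δri → y = y') ∧
  (∀ x y y', (x, y) ∈ A.Δir → (x, y') ∈ A.Δir → y = y') ∧
  (∀ x y y', (x, y) ∈ A.Δii → (x, y') ∈ A.Δii → y = y')

/-- Complete 2NWA: each transition table provides an output for every input. -/
def TwoNWA.Complete {α Q P : Type} (A : TwoNWA α Q P) : Prop :=
  (∀ x, ∃ y, (x, y) ∈ A.Δcc) ∧ (∀ x, ∃ y, (x, y) ∈ A.Δrc) ∧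
  (∀ x, ∃ y, (x, y) ∈ A.Δcr) ∧ (∀ x, ∃ y, (x, y) ∈ A.Δrr) ∧
  (∀ x, ∃ y, (x, y) ∈ A.Δci) ∧ (∀ x, ∃ y, (x, y) ∈ A.Δic) ∧
  (∀ x, ∃ y, (x, y) ∈ A.Δri) ∧ (∀ x, ∃ y, (x, y) ∈ A.Δir) ∧
  (∀ x, ∃ y, (x, y) ∈ A.Δii)

/-- Weakly-hierarchical post form: hierarchical states are the linear states,
and every hierarchical output of a transition equals its target linear state. -/
def TwoNWA.PostForm {α Q : Type} (A : TwoNWA α Q Q) : Prop :=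
  (∀ t ∈ A.Δcc, t.2.1 = t.2.2.2 ∧ t.2.2.1 = t.2.2.2) ∧
  (∀ t ∈ A.Δrc, t.2.1 = t.2.2) ∧
  (∀ t ∈ A.Δcr, t.2.1 = t.2.2) ∧
  (∀ t ∈ A.Δci, t.2.1 = t.2.2) ∧
  (∀ t ∈ A.Δic, t.2.1 = t.2.2)

/-- Nice 2NWA: in every non-internal transition all hierarchical states
involved are equal. -/
def TwoNWA.Nice {α Q P : Type} (A : TwoNWA α Q P) : Prop :=
  (∀ t ∈ A.Δcc, t.2.1 = t.2.2.1) ∧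
  (∀ t ∈ A.Δrc, t.1.2.1 = t.2.1) ∧
  (∀ t ∈ A.Δcr, t.1.2.1 = t.2.1) ∧
  (∀ t ∈ A.Δrr, t.1.2.1 = t.1.2.2.1)

/-- A regular language of 2-nested words. -/
def RegularTwoNWL {α : Type} (L : Set (TwoNW α)) : Prop :=
  ∃ (Q P : Type) (_ : Finite Q) (_ : Finite P) (A : TwoNWA α Q P), A.lang = L

/-! On a 2-wave word every position is either internal for both matchings or lies in exactly one
2-wave `i1 < i2 < i3 < i4`, and its role there is fixed by whether it is a call or a return of
`M1` and of `M2`. So a position never fires a mixed (call/return against internal) transition,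
and the nice automaton can guess, at `i1`, the four hierarchical states that `A` puts on the
arches of the wave, and carry this quadruple along all four arches: each position of the wave
then checks `A`'s transition on the components it needs. -/

namespace Matching

variable {n : ℕ} (M : Matching n) {i j k : ℕ}

lemma rel_right_unique (h : M.rel i j) (h' : M.rel i k) : j = k :=
  (M.unique i j i k h h' (Or.inl rfl)).2

lemma rel_left_unique (h : M.rel i k) (h' : M.rel j k) : i = j :=
  (M.unique i k j k h h' (Or.inr (Or.inr (Or.inr rfl)))).1

lemma not_rel_of_rel (h : M.rel i j) : ¬ M.rel k i := fun h' => by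
  have := M.unique i j k i h h' (Or.inr (Or.inl rfl))
  have := M.ordered i j h
  omega

lemma not_rel_of_isCall (h : M.IsCall i) : ¬ M.rel k i :=
  M.not_rel_of_rel h.choose_spec

lemma not_isCall_of_rel (h : M.rel j i) : ¬ M.IsCall i :=
  fun ⟨_, h'⟩ => M.not_rel_of_rel h' h

lemma rel_iff_eq_of_rel (h : M.rel j i) : M.rel k i ↔ k = j :=
  ⟨fun h' => M.rel_left_unique h' h, fun e => e ▸ h⟩

end Matching

section Waves

variable {n : ℕ} {M1 M2 : Matching n}

lemma IsTwoWaveQuad.eq_of_mem {a b c d a' b' c' d' i : ℕ}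
    (h : IsTwoWaveQuad M1 M2 a b c d) (h' : IsTwoWaveQuad M1 M2 a' b' c' d')
    (hi : i = a ∨ i = b ∨ i = c ∨ i = d) (hi' : i = a' ∨ i = b' ∨ i = c' ∨ i = d') :
    a = a' ∧ b = b' ∧ c = c' ∧ d = d' := by
  obtain ⟨-, -, -, h12, h34, h23, h14⟩ := h
  obtain ⟨-, -, -, h12', h34', h23', h14'⟩ := h'
  -- The call/return profile of `i` fixes its role in both waves, and one position of a wave
  -- determines the other three.
  grind [Matching.rel_left_unique, Matching.rel_right_unique, Matching.not_rel_of_rel]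

noncomputable def waveOf (M1 M2 : Matching n) (i : ℕ) : ℕ × ℕ × ℕ × ℕ :=
  Classical.epsilon fun q => IsTwoWaveQuad M1 M2 q.1 q.2.1 q.2.2.1 q.2.2.2 ∧
    (i = q.1 ∨ i = q.2.1 ∨ i = q.2.2.1 ∨ i = q.2.2.2)

lemma waveOf_eq {a b c d i : ℕ} (h : IsTwoWaveQuad M1 M2 a b c d)
    (hi : i = a ∨ i = b ∨ i = c ∨ i = d) : waveOf M1 M2 i = (a, b, c, d) := by
  obtain ⟨hq, hiq⟩ := Classical.epsilon_spec (p := fun q : ℕ × ℕ × ℕ × ℕ =>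
    IsTwoWaveQuad M1 M2 q.1 q.2.1 q.2.2.1 q.2.2.2 ∧
      (i = q.1 ∨ i = q.2.1 ∨ i = q.2.2.1 ∨ i = q.2.2.2)) ⟨(a, b, c, d), h, hi⟩
  obtain ⟨ha, hb, hc, hd⟩ := hq.eq_of_mem h hiq hi
  exact Prod.ext ha (Prod.ext hb (Prod.ext hc hd))

lemma IsWaveStructure.role (hW : IsWaveStructure M1 M2) (i : ℕ) :
    (∃ b c d, IsTwoWaveQuad M1 M2 i b c d) ∨ (∃ a c d, IsTwoWaveQuad M1 M2 a i c d) ∨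
    (∃ a b d, IsTwoWaveQuad M1 M2 a b i d) ∨ (∃ a b c, IsTwoWaveQuad M1 M2 a b c i) ∨
    (M1.IsInt i ∧ M2.IsInt i) := by
  obtain ⟨hW1, hW2⟩ := hW
  by_cases hc1 : M1.IsCall i
  · obtain ⟨j, hj⟩ := hc1
    obtain ⟨a, b, c, d, hq, ⟨rfl, rfl⟩ | ⟨rfl, rfl⟩⟩ := hW1 i j hj
    exacts [Or.inl ⟨_, _, _, hq⟩, Or.inr (Or.inr (Or.inl ⟨_, _, _, hq⟩))]
  by_cases hr1 : M1.IsRet i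
  · obtain ⟨j, hj⟩ := hr1
    obtain ⟨a, b, c, d, hq, ⟨rfl, rfl⟩ | ⟨rfl, rfl⟩⟩ := hW1 j i hj
    exacts [Or.inr (Or.inl ⟨_, _, _, hq⟩), Or.inr (Or.inr (Or.inr (Or.inl ⟨_, _, _, hq⟩)))]
  refine Or.inr (Or.inr (Or.inr (Or.inr ⟨⟨hc1, hr1⟩, ?_, ?_⟩)))
  · rintro ⟨j, hj⟩
    obtain ⟨a, b, c, d, hq, ⟨rfl, -⟩ | ⟨rfl, -⟩⟩ := hW2 i j hj
    exacts [hr1 ⟨a, hq.2.2.2.1⟩, hc1 ⟨b, hq.2.2.2.1⟩]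
  · rintro ⟨j, hj⟩
    obtain ⟨a, b, c, d, hq, ⟨-, rfl⟩ | ⟨-, rfl⟩⟩ := hW2 j i hj
    exacts [hc1 ⟨d, hq.2.2.2.2.1⟩, hr1 ⟨c, hq.2.2.2.2.1⟩]

end Waves

namespace TwoNWA

variable {α Q P : Type} (A : TwoNWA α Q P) {ω : TwoNW α} {ℓ : ℕ → Q} {h1 h2 : ℕ → P}
  {i j k : ℕ}

lemma runAt_iff_of_isCall_isCall (c1 : ω.M1.IsCall i) (c2 : ω.M2.IsCall i) :
    A.RunAt ω ℓ h1 h2 i ↔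
      ∃ a, ω.word[i - 1]? = some a ∧ ((ℓ (i-1), a), (h1 i, h2 i, ℓ i)) ∈ A.Δcc := by
  simp [RunAt, Matching.IsInt, c1, c2, ω.M1.not_rel_of_isCall c1, ω.M2.not_rel_of_isCall c2]

lemma runAt_iff_of_rel_isCall (r1 : ω.M1.rel j i) (c2 : ω.M2.IsCall i) :
    A.RunAt ω ℓ h1 h2 i ↔
      ∃ a, ω.word[i - 1]? = some a ∧ ((ℓ (i-1), h1 j, a), (h2 i, ℓ i)) ∈ A.Δrc := by
  simp [RunAt, Matching.IsInt, Matching.IsRet, c2, ω.M1.not_isCall_of_rel r1,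
    ω.M1.rel_iff_eq_of_rel r1, ω.M2.not_rel_of_isCall c2]

lemma runAt_iff_of_isCall_rel (c1 : ω.M1.IsCall i) (r2 : ω.M2.rel j i) :
    A.RunAt ω ℓ h1 h2 i ↔
      ∃ a, ω.word[i - 1]? = some a ∧ ((ℓ (i-1), h2 j, a), (h1 i, ℓ i)) ∈ A.Δcr := by
  simp [RunAt, Matching.IsInt, Matching.IsRet, c1, ω.M2.not_isCall_of_rel r2,
    ω.M2.rel_iff_eq_of_rel r2, ω.M1.not_rel_of_isCall c1]

lemma runAt_iff_of_rel_rel (r1 : ω.M1.rel j i) (r2 : ω.M2.rel k i) :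
    A.RunAt ω ℓ h1 h2 i ↔
      ∃ a, ω.word[i - 1]? = some a ∧ ((ℓ (i-1), h1 j, h2 k, a), ℓ i) ∈ A.Δrr := by
  simp [RunAt, Matching.IsInt, Matching.IsRet, ω.M1.not_isCall_of_rel r1,
    ω.M2.not_isCall_of_rel r2, ω.M1.rel_iff_eq_of_rel r1, ω.M2.rel_iff_eq_of_rel r2]

lemma runAt_iff_of_isInt_isInt (n1 : ω.M1.IsInt i) (n2 : ω.M2.IsInt i) :
    A.RunAt ω ℓ h1 h2 i ↔ ∃ a, ω.word[i - 1]? = some a ∧ ((ℓ (i-1), a), ℓ i) ∈ A.Δii := by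
  obtain ⟨c1, r1⟩ := n1
  obtain ⟨c2, r2⟩ := n2
  simp only [Matching.IsCall, Matching.IsRet, not_exists] at c1 r1 c2 r2
  simp [RunAt, Matching.IsInt, Matching.IsCall, Matching.IsRet, c1, r1, c2, r2]

/-- A hierarchical state `(p12, p34, p23, p14)` of `A.toNice` records the states `A` puts on
the arches `(i1, i2)`, `(i3, i4)`, `(i2, i3)`, `(i1, i4)` of a wave. The mixed transitions are
dropped, as they never fire on 2-wave words. -/
def toNice : TwoNWA α Q (P × P × P × P) where
  init := A.init
  final := A.final
  Δcc := {t | let ((q, a), (π, π', q')) := t; π = π' ∧ ((q, a), (π.1, π'.2.2.2, q')) ∈ A.Δcc}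
  Δrc := {t | let ((q, π, a), (π', q')) := t; π = π' ∧ ((q, π.1, a), (π'.2.2.1, q')) ∈ A.Δrc}
  Δcr := {t | let ((q, π, a), (π', q')) := t; π = π' ∧ ((q, π.2.2.1, a), (π'.2.1, q')) ∈ A.Δcr}
  Δrr := {t | let ((q, π, π', a), q') := t; π = π' ∧ ((q, π.2.1, π'.2.2.2, a), q') ∈ A.Δrr}
  Δci := ∅
  Δic := ∅
  Δri := ∅
  Δir := ∅
  Δii := A.Δii

lemma nice_toNice : A.toNice.Nice :=
  ⟨fun _ h => h.1, fun _ h => h.1, fun _ h => h.1, fun _ h => h.1⟩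

def waveLabel (h1 h2 : ℕ → P) (q : ℕ × ℕ × ℕ × ℕ) : P × P × P × P :=
  (h1 q.1, h1 q.2.2.1, h2 q.2.1, h2 q.1)

lemma runAt_toNice_of_runAt (hW : ω.IsWaveWord) (h : A.RunAt ω ℓ h1 h2 i) :
    A.toNice.RunAt ω ℓ (waveLabel h1 h2 ∘ waveOf ω.M1 ω.M2)
      (waveLabel h1 h2 ∘ waveOf ω.M1 ω.M2) i := by
  rcases hW.role i with ⟨b, c, d, hq⟩ | ⟨a, c, d, hq⟩ | ⟨a, b, d, hq⟩ | ⟨a, b, c, hq⟩ | ⟨n1, n2⟩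
  · have ⟨_, _, _, h12, _, _, h14⟩ := hq
    rw [runAt_iff_of_isCall_isCall _ ⟨b, h12⟩ ⟨d, h14⟩] at h ⊢
    simpa [toNice, waveLabel, waveOf_eq hq (Or.inl rfl)] using h
  · have ⟨_, _, _, h12, _, h23, _⟩ := hq
    rw [runAt_iff_of_rel_isCall _ h12 ⟨c, h23⟩] at h ⊢
    simpa [toNice, waveLabel, waveOf_eq hq (Or.inl rfl), waveOf_eq hq (Or.inr (Or.inl rfl))]
      using h
  · have ⟨_, _, _, _, h34, h23, _⟩ := hq
    rw [runAt_iff_of_isCall_rel _ ⟨d, h34⟩ h23] at h ⊢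
    simpa [toNice, waveLabel, waveOf_eq hq (Or.inr (Or.inl rfl)),
      waveOf_eq hq (Or.inr (Or.inr (Or.inl rfl)))] using h
  · have ⟨_, _, _, _, h34, _, h14⟩ := hq
    rw [runAt_iff_of_rel_rel _ h34 h14] at h ⊢
    simpa [toNice, waveLabel, waveOf_eq hq (Or.inl rfl),
      waveOf_eq hq (Or.inr (Or.inr (Or.inl rfl)))] using h
  · rw [runAt_iff_of_isInt_isInt _ n1 n2] at h ⊢
    exact h

/- An `M1`-call is the `i1` or the `i3` of its wave, told apart by being an `M2`-call; likewise an
`M2`-call is the `i1` or the `i2`. This picks the component of the quadruple to read off. -/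
open Classical in
lemma runAt_of_runAt_toNice {H1 H2 : ℕ → P × P × P × P} (hW : ω.IsWaveWord)
    (h : A.toNice.RunAt ω ℓ H1 H2 i) :
    A.RunAt ω ℓ (fun i => if ω.M2.IsCall i then (H1 i).1 else (H1 i).2.1)
      (fun i => if ω.M1.IsCall i then (H2 i).2.2.2 else (H2 i).2.2.1) i := by
  rcases hW.role i with ⟨b, c, d, hq⟩ | ⟨a, c, d, hq⟩ | ⟨a, b, d, hq⟩ | ⟨a, b, c, hq⟩ | ⟨n1, n2⟩
  · have ⟨_, _, _, h12, _, _, h14⟩ := hq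
    have c1 : ω.M1.IsCall i := ⟨b, h12⟩
    have c2 : ω.M2.IsCall i := ⟨d, h14⟩
    rw [runAt_iff_of_isCall_isCall _ c1 c2] at h ⊢
    exact h.imp fun _ ⟨hx, _, htr⟩ => ⟨hx, by simpa [c1, c2] using htr⟩
  · have ⟨_, _, _, h12, _, h23, h14⟩ := hq
    have ca : ω.M2.IsCall a := ⟨d, h14⟩
    rw [runAt_iff_of_rel_isCall _ h12 ⟨c, h23⟩] at h ⊢
    exact h.imp fun _ ⟨hx, _, htr⟩ =>
      ⟨hx, by simpa [ca, ω.M1.not_isCall_of_rel h12] using htr⟩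
  · have ⟨_, _, _, h12, h34, h23, _⟩ := hq
    rw [runAt_iff_of_isCall_rel _ ⟨d, h34⟩ h23] at h ⊢
    exact h.imp fun _ ⟨hx, _, htr⟩ =>
      ⟨hx, by simpa [ω.M2.not_isCall_of_rel h23, ω.M1.not_isCall_of_rel h12] using htr⟩
  · have ⟨_, _, _, h12, h34, h23, h14⟩ := hq
    have ca : ω.M1.IsCall a := ⟨b, h12⟩
    rw [runAt_iff_of_rel_rel _ h34 h14] at h ⊢
    exact h.imp fun _ ⟨hx, _, htr⟩ =>
      ⟨hx, by simpa [ω.M2.not_isCall_of_rel h23, ca] using htr⟩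
  · rw [runAt_iff_of_isInt_isInt _ n1 n2] at h ⊢
    exact h

lemma accepts_toNice_iff (hW : ω.IsWaveWord) : A.toNice.Accepts ω ↔ A.Accepts ω := by
  constructor
  · rintro ⟨ℓ, H1, H2, hrun, hinit, hfinal⟩
    exact ⟨ℓ, _, _, fun i _ _ => A.runAt_of_runAt_toNice hW (hrun i ‹_› ‹_›), hinit, hfinal⟩
  · rintro ⟨ℓ, h1, h2, hrun, hinit, hfinal⟩
    exact ⟨ℓ, _, _, fun i _ _ => A.runAt_toNice_of_runAt hW (hrun i ‹_› ‹_›), hinit, hfinal⟩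

lemma langWW_toNice : A.toNice.langWW = A.langWW := by
  ext ω
  exact and_congr_left (A.accepts_toNice_iff ·)

end TwoNWA

theorem nice_normalization_general (α Q P : Type) [Finite Q] [Finite P]
    (A : TwoNWA α Q P) :
    ∃ (Q' P' : Type) (_ : Finite Q') (_ : Finite P') (A' : TwoNWA α Q' P'),
      A'.Nice ∧ A.langWW = A'.langWW :=
  ⟨Q, P × P × P × P, inferInstance, inferInstance, A.toNice, A.nice_toNice,
    A.langWW_toNice.symm⟩

/-- Every 2NWA is equivalent, over 2-wave words, to a nice
2NWA. -/
theorem nice_normalization (α Q P : Type) [Finite α] [Finite Q] [Finite P]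
    (A : TwoNWA α Q P) :
    ∃ (Q' P' : Type) (_ : Finite Q') (_ : Finite P') (A' : TwoNWA α Q' P'),
      A'.Nice ∧ A.langWW = A'.langWW :=
  nice_normalization_general α Q P A
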